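/- arXiv:math/0404020 — 2 statements merged into one kernel-verified Lean document; each statement's English description precedes it below -/
import Mathlib

section
/- For each bounded linear functional ω ∈ J_σ(R)* and each π ∈ R, there is a unique bounded operator π(ω) ∈ B(H_π) such that ‖π(ω)‖ ≤ ‖ω‖ and ω applied to the coefficient function x ↦ ⟨ψ, π(x)φ⟩ equals ⟨ψ, π(ω)φ⟩ for all ψ, φ ∈ H_π. Moreover π(ω) preserves each cyclic subspace of G in H_π: π(ω)H_ψ ⊆ H_ψ for every ψ ∈ H_π, where H_ψ := closed span of π(G)ψ. -/
/-!
A unitary `σ`-representation `ρ` has `‖x ↦ ⟪ψ, ρ(x) φ⟫‖_* ≤ ‖ψ‖ ‖φ‖`, since every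
`Σ c_x δ_x` in the unit ball of `C*_σ(G_d)` is sent by `ρ` to an operator of norm `≤ 1`.
So `(ψ, φ) ↦ ω(x ↦ ⟪ψ, ρ(x) φ⟫)` is a bounded sesquilinear form of norm `≤ ‖ω‖`, and `ρ(ω)` is
the operator representing it. The cocycle identity makes every `ρ(x)` preserve the cyclic
subspace `H_ψ`, so `x ↦ ⟪χ, ρ(x) φ⟫` vanishes for `χ ⊥ H_ψ`, `φ ∈ H_ψ`; hence `ρ(ω) φ ⊥ H_ψᗮ`.
-/

open scoped MultiplierAlgebra
open Filter Topology

noncomputable section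

/-- A jointly continuous normalized circle-valued 2-cocycle on `G`. -/
def IsNormalizedCocycle (G : Type) [Group G] [TopologicalSpace G] (σ : G → G → ℂ) : Prop :=
  (∀ x y, ‖σ x y‖ = 1) ∧
  (∀ x y z, σ x y * σ (x * y) z = σ y z * σ x (y * z)) ∧
  (∀ x, σ x 1 = 1) ∧ (∀ x, σ 1 x = 1) ∧ (∀ x, σ x x⁻¹ = 1) ∧
  (∀ x y, (starRingEnd ℂ) (σ x y) = σ y⁻¹ x⁻¹) ∧
  Continuous fun p : G × G => σ p.1 p.2

/-- A family of bounded operators on a complex Hilbert space, indexed by `G`: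
the carrier of a (possible) unitary `σ`-representation of `G`. -/
structure PreRep (G : Type) where
  H : Type
  [instNACG : NormedAddCommGroup H]
  [instIPS : InnerProductSpace ℂ H]
  [instComplete : CompleteSpace H]
  U : G → H →L[ℂ] H

attribute [instance] PreRep.instNACG PreRep.instIPS PreRep.instComplete

/-- `ρ` is a unitary `σ`-representation of `G` (not necessarily continuous). -/
def PreRep.IsRep {G : Type} [Group G] (σ : G → G → ℂ) (ρ : PreRep G) : Prop :=
  (∀ x, ρ.U x ∈ unitary (ρ.H →L[ℂ] ρ.H)) ∧
  (∀ x y, ρ.U x ∘L ρ.U y = σ x y • ρ.U (x * y))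

/-- Strong-operator continuity of a representation of `G`. -/
def PreRep.IsSOTCont {G : Type} [TopologicalSpace G] (ρ : PreRep G) : Prop :=
  ∀ ψ : ρ.H, Continuous fun x : G => ρ.U x ψ

/-- The set `Rep_σ G` of strong-operator continuous unitary `σ`-representations. -/
def ContRepSet (G : Type) [Group G] [TopologicalSpace G] (σ : G → G → ℂ) : Set (PreRep G) :=
  {ρ | ρ.IsRep σ ∧ ρ.IsSOTCont}

/-- A nondegenerate Hilbert-space representation of a (non-unital) C*-algebra `L`. -/
structure RepOf (L : Type) [NonUnitalCStarAlgebra L] where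
  H : Type
  [instNACG : NormedAddCommGroup H]
  [instIPS : InnerProductSpace ℂ H]
  [instComplete : CompleteSpace H]
  ρ : L →⋆ₙₐ[ℂ] (H →L[ℂ] H)
  nondeg : (Submodule.span ℂ {ψ : H | ∃ (a : L) (v : H), ρ a v = ψ}).topologicalClosure = ⊤

attribute [instance] RepOf.instNACG RepOf.instIPS RepOf.instComplete

/-- A `σ`-group algebra for the pair `(G, R)`:  a C*-algebra `L` with a `σ`-homomorphism
`φ` of `G` into the unitaries of the multiplier algebra `𝓜(ℂ, L)`, such that the
extension map `θ` (defined on the nondegenerate representations `π` of `L` by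
`θ(π)(g) (π(a)ψ) = π((φ g)·a) ψ`, i.e. the strict extension of `π` evaluated at `φ(g)`)
is injective with image exactly `R`. -/
structure SigmaGroupAlgebra (G : Type) [Group G] [TopologicalSpace G] (σ : G → G → ℂ)
    (R : Set (PreRep G)) where
  L : Type
  [instL : NonUnitalCStarAlgebra L]
  φ : G → 𝓜(ℂ, L)
  φ_unitary : ∀ g, φ g ∈ unitary 𝓜(ℂ, L)
  φ_mul : ∀ g h, φ g * φ h = σ g h • φ (g * h)
  θU : (π : RepOf L) → G → (π.H →L[ℂ] π.H)
  θ_ext : ∀ (π : RepOf L) (g : G) (a : L) (ψ : π.H),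
    θU π g (π.ρ a ψ) = π.ρ ((φ g).fst a) ψ
  θ_rep : ∀ π : RepOf L, (PreRep.mk π.H (θU π)).IsRep σ
  θ_inj : ∀ π₁ π₂ : RepOf L,
    PreRep.mk π₁.H (θU π₁) = PreRep.mk π₂.H (θU π₂) → π₁ = π₂
  θ_range : {ρ : PreRep G | ∃ π : RepOf L, PreRep.mk π.H (θU π) = ρ} = R

attribute [instance] SigmaGroupAlgebra.instL

/-- the (Hilbert space) direct sum of two representation families -/
def PreRep.dsum {G : Type} (ρ₁ ρ₂ : PreRep G) : PreRep G where
  H := WithLp 2 (ρ₁.H × ρ₂.H)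
  U x := ((WithLp.prodContinuousLinearEquiv 2 ℂ ρ₁.H ρ₂.H).symm :
            (ρ₁.H × ρ₂.H) →L[ℂ] WithLp 2 (ρ₁.H × ρ₂.H)).comp
    (((ρ₁.U x).prodMap (ρ₂.U x)).comp
      ((WithLp.prodContinuousLinearEquiv 2 ℂ ρ₁.H ρ₂.H :
        WithLp 2 (ρ₁.H × ρ₂.H) →L[ℂ] ρ₁.H × ρ₂.H)))

section FunctionSpaces

variable {G : Type} [Group G] [TopologicalSpace G]

/-- The norm of `ν = Σ c_x δ_x` in the twisted discrete group C*-algebra `C*_σ(G_d)`: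
the supremum of the operator norms over all unitary `σ`-representations. -/
def discNorm (σ : G → G → ℂ) (ν : G →₀ ℂ) : ℝ :=
  ⨆ ρ : {ρ : PreRep G // ρ.IsRep σ}, ‖ν.sum fun x c => c • (ρ.1.U x)‖

/-- The norm `‖f‖_*` of a function on `G`, as a functional on `C*_σ(G_d)`:
`‖f‖_* = sup { |f̌(A)| : A ∈ C*_σ(G_d), ‖A‖ ≤ 1 }`, where it suffices to let `A` run
over the dense unit ball of the twisted group ring. -/
def starNorm (σ : G → G → ℂ) (f : G → ℂ) : ℝ :=
  ⨆ ν : {ν : G →₀ ℂ // discNorm σ ν ≤ 1}, ‖ν.1.sum fun x c => c * f x‖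

/-- The supremum norm `‖f‖_∞`. -/
def supNorm (f : G → ℂ) : ℝ := ⨆ x : G, ‖f x‖

/-- `B_σ(R)`: the set of coefficient functions of representations in `R`. -/
def BCoef (σ : G → G → ℂ) (R : Set (PreRep G)) : Set (G → ℂ) :=
  {f | ∃ ρ ∈ R, ∃ ψ φ : ρ.H, f = fun x => (inner ℂ ψ (ρ.U x φ) : ℂ)}

/-- left `σ`-translation `(λ_x f)(y) = σ(x,y) f(xy)`. -/
def ltrans (σ : G → G → ℂ) (x : G) (f : G → ℂ) : G → ℂ := fun y => σ x y * f (x * y)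

/-- right `σ`-translation `(ρ_x f)(y) = σ(y,x) f(yx)`. -/
def rtrans (σ : G → G → ℂ) (x : G) (f : G → ℂ) : G → ℂ := fun y => σ y x * f (y * x)

/-- the involution `f*(x) = conj (f (x⁻¹))`. -/
def finv (f : G → ℂ) : G → ℂ := fun x => (starRingEnd ℂ) (f x⁻¹)

/-- `J_σ(R)`: the completion of `B_σ(R)` in the norm `‖·‖_*`, realized concretely as the
set of functions approximable in `‖·‖_*` by elements of `B_σ(R)`. -/
def Jset (σ : G → G → ℂ) (R : Set (PreRep G)) : Set (G → ℂ) :=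
  {f | ∀ ε > (0:ℝ), ∃ g ∈ BCoef σ R, starNorm σ (f - g) < ε}

/-- `K_σ(R)`: the completion of `B_σ(R)` in the norm `‖·‖_∞`, realized concretely as the
set of functions uniformly approximable by elements of `B_σ(R)`. -/
def Kset (σ : G → G → ℂ) (R : Set (PreRep G)) : Set (G → ℂ) :=
  {f | ∀ ε > (0:ℝ), ∃ g ∈ BCoef σ R, supNorm (f - g) < ε}

end FunctionSpaces

section Packages

/-- A realization of the Banach space `J_σ(R)`: the completion of the space `B_σ(R)` of
coefficient functions in the norm `‖·‖_*`, together with the left and right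
`σ`-translations, the involution, and the point evaluations `δ_x ∈ J_σ(R)*`. -/
structure JPackage (G : Type) [Group G] [TopologicalSpace G] (σ : G → G → ℂ)
    (R : Set (PreRep G)) where
  /-- `B_σ(R)` as a subspace of the functions on `G` -/
  Bmod : Submodule ℂ (G → ℂ)
  Bmod_eq : (Bmod : Set (G → ℂ)) = BCoef σ R
  /-- the Banach space `J_σ(R)` -/
  J : Type
  [instJ1 : NormedAddCommGroup J]
  [instJ2 : NormedSpace ℂ J]
  [instJ3 : CompleteSpace J]
  /-- the canonical inclusion of `B_σ(R)` in `J_σ(R)`, isometric w.r.t. `‖·‖_*` and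
  with dense range -/
  ι : Bmod →ₗ[ℂ] J
  ι_norm : ∀ f : Bmod, ‖ι f‖ = starNorm σ (f : G → ℂ)
  denseRange : DenseRange fun f : Bmod => ι f
  /-- left `σ`-translation on `B_σ(R)` -/
  lamB : G → Bmod → Bmod
  lamB_spec : ∀ (x : G) (f : Bmod), ((lamB x f : Bmod) : G → ℂ) = ltrans σ x (f : G → ℂ)
  /-- right `σ`-translation on `B_σ(R)` -/
  rhoB : G → Bmod → Bmod
  rhoB_spec : ∀ (x : G) (f : Bmod), ((rhoB x f : Bmod) : G → ℂ) = rtrans σ x (f : G → ℂ)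
  /-- the involution `f ↦ f*` on `B_σ(R)` -/
  starB : Bmod → Bmod
  starB_spec : ∀ f : Bmod, ((starB f : Bmod) : G → ℂ) = finv (f : G → ℂ)
  /-- the point evaluations `δ_x : f ↦ f(x)`, as elements of `J_σ(R)*` -/
  delta : G → (J →L[ℂ] ℂ)
  delta_spec : ∀ (x : G) (f : Bmod), delta x (ι f) = (f : G → ℂ) x

attribute [instance] JPackage.instJ1 JPackage.instJ2 JPackage.instJ3

variable {G : Type} [Group G] [TopologicalSpace G] {σ : G → G → ℂ} {R : Set (PreRep G)}

/-- `J_σ(R)` together with the convolution and involution on its dual `J_σ(R)*`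
(established in Theorem 3.3 of the paper), and the representations `ω ↦ π(ω)` of
`J_σ(R)*` associated to the elements `π ∈ R` (Lemma 3.1). -/
structure ConvPackage (G : Type) [Group G] [TopologicalSpace G] (σ : G → G → ℂ)
    (R : Set (PreRep G)) extends JPackage G σ R where
  /-- the convolution `(ξ*ω)(f) = ξ_x(ω_y(σ(x,y)f(xy))) = ξ(f^ω)` on `J_σ(R)*` -/
  conv : (J →L[ℂ] ℂ) → (J →L[ℂ] ℂ) → (J →L[ℂ] ℂ)
  conv_spec : ∀ (ξ ω : J →L[ℂ] ℂ) (f g : Bmod),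
    ((g : G → ℂ) = fun x => ω (ι (lamB x f))) → conv ξ ω (ι f) = ξ (ι g)
  /-- the involution `ω*(f) = conj (ω (f*))` on `J_σ(R)*` -/
  invol : (J →L[ℂ] ℂ) → (J →L[ℂ] ℂ)
  invol_spec : ∀ (ω : J →L[ℂ] ℂ) (f : Bmod),
    invol ω (ι f) = (starRingEnd ℂ) (ω (ι (starB f)))
  /-- for `ρ ∈ R` and `ω ∈ J_σ(R)*`, the operator `ρ(ω)` with
  `⟨ψ, ρ(ω) φ⟩ = ω(x ↦ ⟨ψ, ρ(x) φ⟩)` -/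
  opRep : (ρ : PreRep G) → ρ ∈ R → (J →L[ℂ] ℂ) → (ρ.H →L[ℂ] ρ.H)
  opRep_spec : ∀ (ρ : PreRep G) (hρ : ρ ∈ R) (ω : J →L[ℂ] ℂ) (ψ φ : ρ.H) (f : Bmod),
    ((f : G → ℂ) = fun x => (inner ℂ ψ (ρ.U x φ) : ℂ)) →
      (inner ℂ ψ (opRep ρ hρ ω φ) : ℂ) = ω (ι f)

/-- A d-ideal of `J_σ(R)*`: a nonzero norm-closed *-subalgebra `S` with
`δ_x * S ⊆ S ⊇ S * δ_x` for all `x ∈ G`. -/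
structure IsDIdealSet (P : ConvPackage G σ R) (S : Set (P.J →L[ℂ] ℂ)) : Prop where
  nonzero : ∃ ω ∈ S, ω ≠ 0
  zero_mem : (0 : P.J →L[ℂ] ℂ) ∈ S
  add_mem : ∀ ω₁ ∈ S, ∀ ω₂ ∈ S, ω₁ + ω₂ ∈ S
  smul_mem : ∀ (c : ℂ), ∀ ω ∈ S, c • ω ∈ S
  isClosed : IsClosed S
  conv_mem : ∀ ω₁ ∈ S, ∀ ω₂ ∈ S, P.conv ω₁ ω₂ ∈ S
  invol_mem : ∀ ω ∈ S, P.invol ω ∈ S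
  delta_conv_mem : ∀ (x : G), ∀ ω ∈ S, P.conv (P.delta x) ω ∈ S
  conv_delta_mem : ∀ (x : G), ∀ ω ∈ S, P.conv ω (P.delta x) ∈ S

/-- A nondegenerate Hilbert space representation of the subalgebra `S ⊆ J_σ(R)*`
(normalized to vanish off `S`). -/
structure DRep (P : ConvPackage G σ R) (S : Set (P.J →L[ℂ] ℂ)) where
  H : Type
  [instNACG : NormedAddCommGroup H]
  [instIPS : InnerProductSpace ℂ H]
  [instComplete : CompleteSpace H]
  ρ : (P.J →L[ℂ] ℂ) → (H →L[ℂ] H)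
  zero_off : ∀ ω ∉ S, ρ ω = 0
  map_add : ∀ ω₁ ∈ S, ∀ ω₂ ∈ S, ρ (ω₁ + ω₂) = ρ ω₁ + ρ ω₂
  map_smul : ∀ (c : ℂ), ∀ ω ∈ S, ρ (c • ω) = c • ρ ω
  map_mul : ∀ ω₁ ∈ S, ∀ ω₂ ∈ S, ρ (P.conv ω₁ ω₂) = ρ ω₁ ∘L ρ ω₂
  map_star : ∀ ω ∈ S, ρ (P.invol ω) = star (ρ ω)
  bounded : ∀ ω ∈ S, ‖ρ ω‖ ≤ ‖ω‖
  nondeg : (Submodule.span ℂ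
    {ψ : H | ∃ ω ∈ S, ∃ v : H, ρ ω v = ψ}).topologicalClosure = ⊤

attribute [instance] DRep.instNACG DRep.instIPS DRep.instComplete

/-- `V = θ(π)` for a nondegenerate representation `π` of the subalgebra `S ⊆ J_σ(R)*`:
the unitary `σ`-representation of `G` determined by `V(x) π(ω)ψ = π(δ_x * ω)ψ`. -/
def DRep.IsExtOf {P : ConvPackage G σ R} {S : Set (P.J →L[ℂ] ℂ)} (π : DRep P S)
    (V : G → (π.H →L[ℂ] π.H)) : Prop :=
  (PreRep.mk π.H V).IsRep σ ∧
  ∀ (x : G), ∀ ω ∈ S, ∀ ψ : π.H, V x (π.ρ ω ψ) = π.ρ (P.conv (P.delta x) ω) ψ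

end Packages

lemma norm_le_one_of_mem_unitary {E : Type*} [NormedRing E] [StarRing E] [CStarRing E]
    {u : E} (hu : u ∈ unitary E) : ‖u‖ ≤ 1 := by
  rcases subsingleton_or_nontrivial E with _ | _
  · simp [Subsingleton.elim u 0]
  · exact (CStarRing.norm_of_mem_unitary hu).le

namespace PreRep

variable {G : Type} (ρ : PreRep G)

def coef : ρ.H →ₗ⋆[ℂ] ρ.H →ₗ[ℂ] (G → ℂ) :=
  LinearMap.mk₂'ₛₗ (starRingEnd ℂ) (RingHom.id ℂ) (fun ψ φ x => inner ℂ ψ (ρ.U x φ))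
    (fun _ _ _ => funext fun _ => inner_add_left _ _ _)
    (fun _ _ _ => funext fun _ => inner_smul_left _ _ _)
    (fun _ _ _ => funext fun _ => by simp only [map_add, inner_add_right, Pi.add_apply])
    (fun _ _ _ => funext fun _ => by simp only [map_smul, inner_smul_right, Pi.smul_apply,
      smul_eq_mul, RingHom.id_apply])

@[simp]
lemma coef_apply (ψ φ : ρ.H) (x : G) : ρ.coef ψ φ x = inner ℂ ψ (ρ.U x φ) := rfl

def cyclicSubspace (ψ : ρ.H) : Submodule ℂ ρ.H :=
  (Submodule.span ℂ (Set.range fun x : G => ρ.U x ψ)).topologicalClosure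

variable [Group G] {σ : G → G → ℂ} {ρ}

lemma IsRep.U_mem_cyclicSubspace (hρ : ρ.IsRep σ) (x : G) {ψ φ : ρ.H}
    (hφ : φ ∈ ρ.cyclicSubspace ψ) : ρ.U x φ ∈ ρ.cyclicSubspace ψ := by
  set K := Submodule.span ℂ (Set.range fun x : G => ρ.U x ψ)
  have hK : Set.MapsTo (ρ.U x) K K := by
    intro v hv
    refine Submodule.span_induction ?_ (by simp) (fun _ _ _ _ ha hb => by
      simpa using K.add_mem ha hb) (fun c _ _ h => by simpa using K.smul_mem c h) hv
    rintro _ ⟨y, rfl⟩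
    have hxy : ρ.U x (ρ.U y ψ) = σ x y • ρ.U (x * y) ψ := by
      simpa using congrArg (fun A => A ψ) (hρ.2 x y)
    rw [hxy]
    exact K.smul_mem _ (Submodule.subset_span ⟨x * y, rfl⟩)
  have hcl := hK.closure (ρ.U x).continuous
  rw [← Submodule.topologicalClosure_coe] at hcl
  exact hcl hφ

lemma IsRep.norm_sum_smul_le_discNorm (hρ : ρ.IsRep σ) (ν : G →₀ ℂ) :
    ‖ν.sum fun x c => c • ρ.U x‖ ≤ discNorm σ ν := by
  have hbound : ∀ ρ' : {ρ' : PreRep G // ρ'.IsRep σ},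
      ‖ν.sum fun x c => c • ρ'.1.U x‖ ≤ ν.sum fun _ c => ‖c‖ := fun ρ' =>
    (norm_sum_le _ _).trans <| Finset.sum_le_sum fun x _ => by
      rw [norm_smul]
      exact mul_le_of_le_one_right (norm_nonneg _) (norm_le_one_of_mem_unitary (ρ'.2.1 x))
  exact le_ciSup (f := fun ρ' : {ρ' : PreRep G // ρ'.IsRep σ} => ‖ν.sum fun x c => c • ρ'.1.U x‖)
    ⟨_, Set.forall_mem_range.2 hbound⟩ ⟨ρ, hρ⟩

lemma IsRep.starNorm_coef_le (hρ : ρ.IsRep σ) (ψ φ : ρ.H) :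
    starNorm σ (ρ.coef ψ φ) ≤ ‖ψ‖ * ‖φ‖ := by
  refine Real.iSup_le (fun ν => ?_) (by positivity)
  set A := ν.1.sum fun x c => c • ρ.U x
  have hA : (ν.1.sum fun x c => c * ρ.coef ψ φ x) = inner ℂ ψ (A φ) := by
    simp only [A, Finsupp.sum, sum_apply, inner_sum, coef_apply,
      smul_apply, inner_smul_right]
  have hAφ : ‖A φ‖ ≤ ‖φ‖ := (A.le_opNorm φ).trans <|
    mul_le_of_le_one_left (norm_nonneg φ) ((hρ.norm_sum_smul_le_discNorm ν.1).trans ν.2)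
  calc ‖(ν.1.sum fun x c => c * ρ.coef ψ φ x)‖ = ‖(inner ℂ ψ (A φ) : ℂ)‖ := by rw [hA]
    _ ≤ ‖ψ‖ * ‖A φ‖ := norm_inner_le_norm ψ (A φ)
    _ ≤ ‖ψ‖ * ‖φ‖ := mul_le_mul_of_nonneg_left hAφ (norm_nonneg ψ)

end PreRep

namespace JPackage

open InnerProductSpace

variable {G : Type} [Group G] [TopologicalSpace G] {σ : G → G → ℂ} {R : Set (PreRep G)}
  (P : JPackage G σ R) {ρ : PreRep G}

lemma coef_mem (hρR : ρ ∈ R) (ψ φ : ρ.H) : ρ.coef ψ φ ∈ P.Bmod := by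
  rw [← SetLike.mem_coe, P.Bmod_eq]
  exact ⟨ρ, hρR, ψ, φ, rfl⟩

def coefB (hρR : ρ ∈ R) : ρ.H →ₗ⋆[ℂ] ρ.H →ₗ[ℂ] P.Bmod :=
  LinearMap.mk₂'ₛₗ (starRingEnd ℂ) (RingHom.id ℂ) (fun ψ φ => ⟨ρ.coef ψ φ, P.coef_mem hρR ψ φ⟩)
    (fun _ _ _ => Subtype.ext (by simp only [map_add, LinearMap.add_apply, Submodule.coe_add]))
    (fun _ _ _ => Subtype.ext (by simp only [map_smulₛₗ, LinearMap.smul_apply,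
      Submodule.coe_smul]))
    (fun _ _ _ => Subtype.ext (by simp only [map_add, Submodule.coe_add]))
    (fun _ _ _ => Subtype.ext (by simp only [map_smul, Submodule.coe_smul, RingHom.id_apply]))

@[simp]
lemma coe_coefB (hρR : ρ ∈ R) (ψ φ : ρ.H) : (P.coefB hρR ψ φ : G → ℂ) = ρ.coef ψ φ := rfl

def coefForm (ω : P.J →L[ℂ] ℂ) (hρR : ρ ∈ R) (hρ : ρ.IsRep σ) : ρ.H →L⋆[ℂ] ρ.H →L[ℂ] ℂ :=
  ((P.coefB hρR).compr₂ₛₗ (ω.toLinearMap ∘ₗ P.ι)).mkContinuous₂ ‖ω‖ fun ψ φ =>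
    calc ‖ω (P.ι (P.coefB hρR ψ φ))‖ ≤ ‖ω‖ * starNorm σ (ρ.coef ψ φ) := by
          rw [← coe_coefB, ← P.ι_norm]; exact ω.le_opNorm _
      _ ≤ ‖ω‖ * ‖ψ‖ * ‖φ‖ := by
          rw [mul_assoc]; exact mul_le_mul_of_nonneg_left (hρ.starNorm_coef_le ψ φ) (norm_nonneg ω)

def repOp (ω : P.J →L[ℂ] ℂ) (hρR : ρ ∈ R) (hρ : ρ.IsRep σ) : ρ.H →L[ℂ] ρ.H :=
  ContinuousLinearMap.adjoint (continuousLinearMapOfBilin (P.coefForm ω hρR hρ))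

variable (ω : P.J →L[ℂ] ℂ) (hρR : ρ ∈ R) (hρ : ρ.IsRep σ)

lemma inner_repOp (ψ φ : ρ.H) :
    inner ℂ ψ (P.repOp ω hρR hρ φ) = ω (P.ι (P.coefB hρR ψ φ)) := by
  rw [repOp, ContinuousLinearMap.adjoint_inner_right, continuousLinearMapOfBilin_apply]
  rfl

lemma norm_repOp_le : ‖P.repOp ω hρR hρ‖ ≤ ‖ω‖ := by
  rw [repOp, LinearIsometryEquiv.norm_map]
  refine ContinuousLinearMap.opNorm_le_bound _ (norm_nonneg ω) fun ψ => ?_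
  calc ‖continuousLinearMapOfBilin (P.coefForm ω hρR hρ) ψ‖ = ‖P.coefForm ω hρR hρ ψ‖ :=
        (toDual ℂ ρ.H).symm.norm_map _
    _ ≤ ‖P.coefForm ω hρR hρ‖ * ‖ψ‖ := ContinuousLinearMap.le_opNorm _ _
    _ ≤ ‖ω‖ * ‖ψ‖ := mul_le_mul_of_nonneg_right
        (LinearMap.mkContinuous₂_norm_le _ (norm_nonneg ω) _) (norm_nonneg ψ)

lemma eq_repOp_of_inner {T : ρ.H →L[ℂ] ρ.H}
    (hT : ∀ ψ φ, inner ℂ ψ (T φ) = ω (P.ι (P.coefB hρR ψ φ))) : T = P.repOp ω hρR hρ :=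
  ContinuousLinearMap.ext fun φ => ext_inner_left ℂ fun ψ => by rw [hT, inner_repOp]

lemma repOp_mem_cyclicSubspace {ψ φ : ρ.H} (hφ : φ ∈ ρ.cyclicSubspace ψ) :
    P.repOp ω hρR hρ φ ∈ ρ.cyclicSubspace ψ := by
  have hclosed : IsClosed (ρ.cyclicSubspace ψ : Set ρ.H) :=
    Submodule.isClosed_topologicalClosure _
  rw [← hclosed.submodule_topologicalClosure_eq, ← Submodule.orthogonal_orthogonal_eq_closure]
  intro χ hχ
  have hcoef : P.coefB hρR χ φ = 0 := Subtype.ext <| funext fun x =>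
    (Submodule.mem_orthogonal' _ _).1 hχ _ (hρ.U_mem_cyclicSubspace x hφ)
  rw [inner_repOp, hcoef, map_zero, map_zero]

end JPackage

theorem stmt_8_general {G : Type} [Group G] [TopologicalSpace G]
    (σ : G → G → ℂ)
    (R : Set (PreRep G)) (hR : ∀ ρ ∈ R, ρ.IsRep σ)
    (P : JPackage G σ R)
    (ω : P.J →L[ℂ] ℂ) (ρ : PreRep G) (hρ : ρ ∈ R) :
    ∃ T : ρ.H →L[ℂ] ρ.H,
      ‖T‖ ≤ ‖ω‖ ∧
      (∀ (ψ φ : ρ.H) (f : P.Bmod),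
        ((f : G → ℂ) = fun x => (inner ℂ ψ (ρ.U x φ) : ℂ)) →
          (inner ℂ ψ (T φ) : ℂ) = ω (P.ι f)) ∧
      (∀ T' : ρ.H →L[ℂ] ρ.H,
        (∀ (ψ φ : ρ.H) (f : P.Bmod),
          ((f : G → ℂ) = fun x => (inner ℂ ψ (ρ.U x φ) : ℂ)) →
            (inner ℂ ψ (T' φ) : ℂ) = ω (P.ι f)) → T' = T) ∧
      (∀ ψ : ρ.H, ∀ φ ∈ (Submodule.span ℂ (Set.range fun x : G => ρ.U x ψ)).topologicalClosure,
        T φ ∈ (Submodule.span ℂ (Set.range fun x : G => ρ.U x ψ)).topologicalClosure) := by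
  have hcoef : ∀ (ψ φ : ρ.H) (f : P.Bmod),
      ((f : G → ℂ) = fun x => (inner ℂ ψ (ρ.U x φ) : ℂ)) → f = P.coefB hρ ψ φ :=
    fun _ _ _ hf => Subtype.ext hf
  refine ⟨P.repOp ω hρ (hR ρ hρ), P.norm_repOp_le ω hρ (hR ρ hρ), ?_, ?_,
    fun ψ φ => P.repOp_mem_cyclicSubspace ω hρ (hR ρ hρ)⟩
  · intro ψ φ f hf
    rw [hcoef ψ φ f hf, P.inner_repOp]
  · exact fun T' hT' => P.eq_repOp_of_inner ω hρ (hR ρ hρ) fun ψ φ => hT' ψ φ _ rfl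

/-- For each `ω ∈ J_σ(R)*` and each `π ∈ R` there is a unique
`π(ω) ∈ B(H_π)` with `‖π(ω)‖ ≤ ‖ω‖` and `ω(x ↦ ⟨ψ, π(x)φ⟩) = ⟨ψ, π(ω)φ⟩` for all
`ψ, φ ∈ H_π`; moreover `π(ω)` preserves each cyclic subspace `H_ψ = [π(G)ψ]`. -/
theorem stmt_8 {G : Type} [Group G] [TopologicalSpace G] [IsTopologicalGroup G] [T2Space G]
    (σ : G → G → ℂ) (hσ : IsNormalizedCocycle G σ)
    (R : Set (PreRep G)) (hR : ∀ ρ ∈ R, ρ.IsRep σ)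
    (hDS : ∀ ρ₁ ∈ R, ∀ ρ₂ ∈ R, ρ₁.dsum ρ₂ ∈ R)
    (P : JPackage G σ R)
    (ω : P.J →L[ℂ] ℂ) (ρ : PreRep G) (hρ : ρ ∈ R) :
    ∃ T : ρ.H →L[ℂ] ρ.H,
      ‖T‖ ≤ ‖ω‖ ∧
      (∀ (ψ φ : ρ.H) (f : P.Bmod),
        ((f : G → ℂ) = fun x => (inner ℂ ψ (ρ.U x φ) : ℂ)) →
          (inner ℂ ψ (T φ) : ℂ) = ω (P.ι f)) ∧
      (∀ T' : ρ.H →L[ℂ] ρ.H,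
        (∀ (ψ φ : ρ.H) (f : P.Bmod),
          ((f : G → ℂ) = fun x => (inner ℂ ψ (ρ.U x φ) : ℂ)) →
            (inner ℂ ψ (T' φ) : ℂ) = ω (P.ι f)) → T' = T) ∧
      (∀ ψ : ρ.H, ∀ φ ∈ (Submodule.span ℂ (Set.range fun x : G => ρ.U x ψ)).topologicalClosure,
        T φ ∈ (Submodule.span ℂ (Set.range fun x : G => ρ.U x ψ)).topologicalClosure) :=
  stmt_8_general σ R hR P ω ρ hρ
end
end

section
/- If a d-ideal A ∈ I(R) separates B_σ(R) (i.e. for every nonzero f ∈ B_σ(R) there exists ω ∈ A with ω(f) ≠ 0), then the extension map θ : Rep A → R is surjective; in fact for every π ∈ R the representation π_A of A is nondegenerate and θ(π_A) = π. -/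
open scoped MultiplierAlgebra
open Filter Topology

noncomputable section

/-!
For `ρ ∈ R` the operators `ρ(ω)` are determined by `⟨ψ, ρ(ω)φ⟩ = ω(x ↦ ⟨ψ, ρ(x)φ⟩)`, and
σ-translates and involutes of coefficient functions of `ρ` are again coefficient functions of
`ρ`: `σ(y,x)⟨ψ, ρ(yx)φ⟩ = ⟨ρ(y)*ψ, ρ(x)φ⟩` and `conj ⟨ψ, ρ(x⁻¹)φ⟩ = ⟨φ, ρ(x)ψ⟩`. Hence
`ω ↦ ρ(ω)` turns convolution into composition and the involution into the adjoint, satisfies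
`ρ(δ_x * ω) = ρ(x)ρ(ω)`, and is contractive because `‖x ↦ ⟨ψ, ρ(x)φ⟩‖_* ≤ ‖ψ‖‖φ‖`.
Nondegeneracy on `A` comes from separation: if `ψ ⊥ ρ(ω)ψ` for all `ω ∈ A`, then `A`
annihilates `x ↦ ⟨ψ, ρ(x)ψ⟩`, so this function vanishes, and at `x = e` it is `‖ψ‖²`.
-/

namespace PreRep.IsRep

variable {G : Type} [Group G] {σ : G → G → ℂ} {ρ : PreRep G}

theorem U_one (h : ρ.IsRep σ) (hσ : σ 1 1 = 1) : ρ.U 1 = 1 := by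
  have hidem : IsIdempotentElem (ρ.U 1) := by
    simpa [IsIdempotentElem, ContinuousLinearMap.mul_def, hσ] using h.2 1 1
  exact (IsIdempotentElem.iff_eq_one_of_isUnit (Unitary.isUnit_coe (U := ⟨_, h.1 1⟩))).1 hidem

theorem star_U (h : ρ.IsRep σ) (hσ₁ : σ 1 1 = 1) (x : G) (hσx : σ x x⁻¹ = 1) :
    star (ρ.U x) = ρ.U x⁻¹ := by
  have hright : ρ.U x * ρ.U x⁻¹ = 1 := by
    simpa [ContinuousLinearMap.mul_def, hσx, h.U_one hσ₁] using h.2 x x⁻¹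
  exact left_inv_eq_right_inv (Unitary.star_mul_self_of_mem (h.1 x)) hright

theorem norm_U_le (h : ρ.IsRep σ) (x : G) : ‖ρ.U x‖ ≤ 1 :=
  ContinuousLinearMap.opNorm_le_bound _ zero_le_one fun φ => by
    rw [ContinuousLinearMap.norm_map_of_mem_unitary (h.1 x), one_mul]

theorem norm_sum_le_discNorm [TopologicalSpace G] (h : ρ.IsRep σ) (ν : G →₀ ℂ) :
    ‖ν.sum fun x c => c • ρ.U x‖ ≤ discNorm σ ν := by
  refine le_ciSup (f := fun ρ' : {ρ' : PreRep G // ρ'.IsRep σ} =>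
    ‖ν.sum fun x c => c • ρ'.1.U x‖) ⟨ν.sum fun _ c => ‖c‖, ?_⟩ ⟨ρ, h⟩
  rintro - ⟨ρ', rfl⟩
  refine (norm_sum_le _ _).trans (Finset.sum_le_sum fun x _ => ?_)
  simpa [norm_smul] using mul_le_mul_of_nonneg_left (ρ'.2.norm_U_le x) (norm_nonneg (ν x))

theorem starNorm_coef_le_s12 [TopologicalSpace G] (h : ρ.IsRep σ) (ψ φ : ρ.H) :
    starNorm σ (fun x => (inner ℂ ψ (ρ.U x φ) : ℂ)) ≤ ‖ψ‖ * ‖φ‖ := by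
  refine Real.iSup_le (fun ⟨ν, hν⟩ => ?_) (by positivity)
  set T := ν.sum fun x c => c • ρ.U x
  have hT : (ν.sum fun x c => c * (inner ℂ ψ (ρ.U x φ) : ℂ)) = inner ℂ ψ (T φ) := by
    simp only [T, Finsupp.sum, sum_apply, inner_sum, smul_apply, inner_smul_right]
  have hT1 : ‖T‖ ≤ 1 := (h.norm_sum_le_discNorm ν).trans hν
  calc ‖ν.sum fun x c => c * (inner ℂ ψ (ρ.U x φ) : ℂ)‖ = ‖(inner ℂ ψ (T φ) : ℂ)‖ := by rw [hT]
    _ ≤ ‖ψ‖ * (‖T‖ * ‖φ‖) := (norm_inner_le_norm _ _).trans (by gcongr; exact T.le_opNorm φ)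
    _ ≤ ‖ψ‖ * ‖φ‖ := by
      have : ‖T‖ * ‖φ‖ ≤ ‖φ‖ := mul_le_of_le_one_left (norm_nonneg _) hT1
      gcongr

end PreRep.IsRep

namespace ConvPackage

variable {G : Type} [Group G] [TopologicalSpace G] {σ : G → G → ℂ} {R : Set (PreRep G)}
  (P : ConvPackage G σ R) {ρ : PreRep G} (hρ : ρ ∈ R)

def coefB (ψ φ : ρ.H) : P.Bmod :=
  ⟨fun x => (inner ℂ ψ (ρ.U x φ) : ℂ), by
    rw [← SetLike.mem_coe, P.Bmod_eq]
    exact ⟨ρ, hρ, ψ, φ, rfl⟩⟩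

theorem inner_opRep (ω : P.J →L[ℂ] ℂ) (ψ φ : ρ.H) :
    (inner ℂ ψ (P.opRep ρ hρ ω φ) : ℂ) = ω (P.ι (P.coefB hρ ψ φ)) :=
  P.opRep_spec ρ hρ ω ψ φ _ rfl

theorem lamB_coefB (h : ρ.IsRep σ) (y : G) (ψ φ : ρ.H) :
    P.lamB y (P.coefB hρ ψ φ) = P.coefB hρ (star (ρ.U y) ψ) φ := by
  refine Subtype.ext ((P.lamB_spec y _).trans (funext fun x => ?_))
  change σ y x * (inner ℂ ψ (ρ.U (y * x) φ) : ℂ) = inner ℂ (star (ρ.U y) ψ) (ρ.U x φ)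
  rw [ContinuousLinearMap.star_eq_adjoint, ContinuousLinearMap.adjoint_inner_left,
    ← ContinuousLinearMap.comp_apply, h.2 y x, smul_apply, inner_smul_right]

theorem starB_coefB (h : ρ.IsRep σ) (hσ₁ : σ 1 1 = 1) (hσinv : ∀ x, σ x x⁻¹ = 1)
    (ψ φ : ρ.H) : P.starB (P.coefB hρ ψ φ) = P.coefB hρ φ ψ := by
  refine Subtype.ext ((P.starB_spec _).trans (funext fun x => ?_))
  change (starRingEnd ℂ) (inner ℂ ψ (ρ.U x⁻¹ φ) : ℂ) = inner ℂ φ (ρ.U x ψ)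
  rw [inner_conj_symm, ← h.star_U hσ₁ x (hσinv x), ContinuousLinearMap.star_eq_adjoint,
    ContinuousLinearMap.adjoint_inner_left]

theorem coefB_opRep (h : ρ.IsRep σ) (ω : P.J →L[ℂ] ℂ) (ψ φ : ρ.H) :
    ((P.coefB hρ ψ (P.opRep ρ hρ ω φ) : P.Bmod) : G → ℂ)
      = fun y => ω (P.ι (P.lamB y (P.coefB hρ ψ φ))) := by
  funext y
  change (inner ℂ ψ (ρ.U y (P.opRep ρ hρ ω φ)) : ℂ) = _
  rw [P.lamB_coefB hρ h, ← inner_opRep, ContinuousLinearMap.star_eq_adjoint,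
    ContinuousLinearMap.adjoint_inner_left]

theorem opRep_conv (h : ρ.IsRep σ) (ξ ω : P.J →L[ℂ] ℂ) :
    P.opRep ρ hρ (P.conv ξ ω) = P.opRep ρ hρ ξ ∘L P.opRep ρ hρ ω := by
  ext φ
  refine ext_inner_left ℂ fun ψ => ?_
  rw [ContinuousLinearMap.comp_apply, inner_opRep, inner_opRep,
    P.conv_spec ξ ω _ _ (P.coefB_opRep hρ h ω ψ φ)]

theorem U_opRep (h : ρ.IsRep σ) (x : G) (ω : P.J →L[ℂ] ℂ) (φ : ρ.H) :
    ρ.U x (P.opRep ρ hρ ω φ) = P.opRep ρ hρ (P.conv (P.delta x) ω) φ := by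
  refine ext_inner_left ℂ fun ψ => ?_
  rw [inner_opRep, P.conv_spec _ ω _ _ (P.coefB_opRep hρ h ω ψ φ), P.delta_spec]
  rfl

theorem opRep_add (ω₁ ω₂ : P.J →L[ℂ] ℂ) :
    P.opRep ρ hρ (ω₁ + ω₂) = P.opRep ρ hρ ω₁ + P.opRep ρ hρ ω₂ := by
  ext φ
  refine ext_inner_left ℂ fun ψ => ?_
  rw [add_apply, inner_add_right, inner_opRep, inner_opRep, inner_opRep, add_apply]

theorem opRep_smul (c : ℂ) (ω : P.J →L[ℂ] ℂ) :
    P.opRep ρ hρ (c • ω) = c • P.opRep ρ hρ ω := by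
  ext φ
  refine ext_inner_left ℂ fun ψ => ?_
  rw [smul_apply, inner_smul_right, inner_opRep, inner_opRep, smul_apply, smul_eq_mul]

theorem opRep_invol (h : ρ.IsRep σ) (hσ₁ : σ 1 1 = 1) (hσinv : ∀ x, σ x x⁻¹ = 1)
    (ω : P.J →L[ℂ] ℂ) : P.opRep ρ hρ (P.invol ω) = star (P.opRep ρ hρ ω) := by
  ext φ
  refine ext_inner_left ℂ fun ψ => ?_
  rw [inner_opRep, P.invol_spec, P.starB_coefB hρ h hσ₁ hσinv, ← inner_opRep, inner_conj_symm,
    ContinuousLinearMap.star_eq_adjoint, ContinuousLinearMap.adjoint_inner_right]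

theorem norm_opRep_le (h : ρ.IsRep σ) (ω : P.J →L[ℂ] ℂ) : ‖P.opRep ρ hρ ω‖ ≤ ‖ω‖ := by
  refine ContinuousLinearMap.opNorm_le_of_re_inner_le (norm_nonneg ω) fun φ ψ hφ hψ => ?_
  calc RCLike.re (inner ℂ (P.opRep ρ hρ ω φ) ψ : ℂ)
      ≤ ‖(inner ℂ ψ (P.opRep ρ hρ ω φ) : ℂ)‖ := by
        rw [← inner_conj_symm, RCLike.conj_re]; exact RCLike.re_le_norm _
    _ = ‖ω (P.ι (P.coefB hρ ψ φ))‖ := by rw [inner_opRep]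
    _ ≤ ‖ω‖ * ‖P.ι (P.coefB hρ ψ φ)‖ := ω.le_opNorm _
    _ ≤ ‖ω‖ * (‖ψ‖ * ‖φ‖) := by
        gcongr
        rw [P.ι_norm]
        exact h.starNorm_coef_le_s12 ψ φ
    _ = ‖ω‖ := by rw [hφ, hψ, mul_one, mul_one]

theorem opRep_nondeg (h : ρ.IsRep σ) (hσ₁ : σ 1 1 = 1) (S : Set (P.J →L[ℂ] ℂ))
    (hsep : ∀ f : P.Bmod, (f : G → ℂ) ≠ 0 → ∃ ω ∈ S, ω (P.ι f) ≠ 0) :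
    (Submodule.span ℂ {ψ : ρ.H | ∃ ω ∈ S, ∃ v : ρ.H,
      P.opRep ρ hρ ω v = ψ}).topologicalClosure = ⊤ := by
  rw [Submodule.topologicalClosure_eq_top_iff, Submodule.eq_bot_iff]
  intro ψ hψ
  have hcoef : ((P.coefB hρ ψ ψ : P.Bmod) : G → ℂ) = 0 := by
    by_contra hne
    obtain ⟨ω, hω, hωψ⟩ := hsep _ hne
    have horth : (inner ℂ (P.opRep ρ hρ ω ψ) ψ : ℂ) = 0 :=
      (Submodule.mem_orthogonal _ ψ).mp hψ _ (Submodule.subset_span ⟨ω, hω, ψ, rfl⟩)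
    rw [← inner_opRep, ← inner_conj_symm, horth, map_zero] at hωψ
    exact hωψ rfl
  have hψψ : (inner ℂ ψ ψ : ℂ) = 0 := by
    simpa [coefB, h.U_one hσ₁] using congrFun hcoef 1
  exact inner_self_eq_zero.mp hψψ

variable (h : ρ.IsRep σ) (hσ₁ : σ 1 1 = 1) (hσinv : ∀ x, σ x x⁻¹ = 1)
  {S : Set (P.J →L[ℂ] ℂ)} (hS : IsDIdealSet P S)
  (hsep : ∀ f : P.Bmod, (f : G → ℂ) ≠ 0 → ∃ ω ∈ S, ω (P.ι f) ≠ 0)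

/-- The representation `π_A` of the d-ideal `A = S` attached to `ρ ∈ R`. -/
def restrictDRep : DRep P S where
  H := ρ.H
  ρ := S.indicator (P.opRep ρ hρ)
  zero_off _ hω := Set.indicator_of_notMem hω _
  map_add ω₁ h₁ ω₂ h₂ := by
    simp only [Set.indicator_of_mem, h₁, h₂, hS.add_mem ω₁ h₁ ω₂ h₂, opRep_add]
  map_smul c ω hω := by
    simp only [Set.indicator_of_mem, hω, hS.smul_mem c ω hω, opRep_smul]
  map_mul ω₁ h₁ ω₂ h₂ := by
    simp only [Set.indicator_of_mem, h₁, h₂, hS.conv_mem ω₁ h₁ ω₂ h₂, P.opRep_conv hρ h]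
  map_star ω hω := by
    simp only [Set.indicator_of_mem, hω, hS.invol_mem ω hω, P.opRep_invol hρ h hσ₁ hσinv]
  bounded ω hω := by
    simpa only [Set.indicator_of_mem hω] using P.norm_opRep_le hρ h ω
  nondeg := by
    convert P.opRep_nondeg hρ h hσ₁ S hsep using 5 with ψ
    exact exists_congr fun ω => and_congr_right fun hω => by rw [Set.indicator_of_mem hω]

theorem restrictDRep_ρ_of_mem {ω : P.J →L[ℂ] ℂ} (hω : ω ∈ S) :
    (P.restrictDRep hρ h hσ₁ hσinv hS hsep).ρ ω = P.opRep ρ hρ ω :=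
  Set.indicator_of_mem hω _

theorem restrictDRep_isExtOf : (P.restrictDRep hρ h hσ₁ hσinv hS hsep).IsExtOf ρ.U := by
  refine ⟨h, fun x ω hω ψ => ?_⟩
  rw [P.restrictDRep_ρ_of_mem hρ h hσ₁ hσinv hS hsep hω,
    P.restrictDRep_ρ_of_mem hρ h hσ₁ hσinv hS hsep (hS.delta_conv_mem x ω hω)]
  exact P.U_opRep hρ h x ω ψ

end ConvPackage

theorem stmt_12_general {G : Type} [Group G] [TopologicalSpace G]
    (σ : G → G → ℂ) (hσ : IsNormalizedCocycle G σ)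
    (R : Set (PreRep G)) (hR : ∀ ρ ∈ R, ρ.IsRep σ)
    (P : ConvPackage G σ R)
    (S : Set (P.J →L[ℂ] ℂ)) (hS : IsDIdealSet P S)
    -- `A` separates `B_σ(R)`
    (hsep : ∀ f : P.Bmod, (f : G → ℂ) ≠ 0 → ∃ ω ∈ S, ω (P.ι f) ≠ 0) :
    -- for every `π ∈ R`, the representation `π_A : ω ↦ π(ω)` of `A` is nondegenerate
    -- and `θ(π_A) = π`
    (∀ (ρ : PreRep G) (hρ : ρ ∈ R),
      ((Submodule.span ℂ {ψ : ρ.H | ∃ ω ∈ S, ∃ v : ρ.H,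
        P.opRep ρ hρ ω v = ψ}).topologicalClosure = ⊤) ∧
      (∀ (x : G), ∀ ω ∈ S, ∀ ψ : ρ.H,
        ρ.U x (P.opRep ρ hρ ω ψ) = P.opRep ρ hρ (P.conv (P.delta x) ω) ψ)) ∧
    -- hence `θ : Rep A → R` is surjective
    (∀ ρ ∈ R, ∃ (π : DRep P S) (V : G → (π.H →L[ℂ] π.H)),
      π.IsExtOf V ∧ PreRep.mk π.H V = ρ) := by
  obtain ⟨-, -, hσ_one, -, hσ_inv, -⟩ := hσ
  refine ⟨fun ρ hρ => ⟨P.opRep_nondeg hρ (hR ρ hρ) (hσ_one 1) S hsep,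
    fun x ω _ ψ => P.U_opRep hρ (hR ρ hρ) x ω ψ⟩, fun ρ hρ => ?_⟩
  exact ⟨P.restrictDRep hρ (hR ρ hρ) (hσ_one 1) hσ_inv hS hsep, ρ.U,
    P.restrictDRep_isExtOf hρ (hR ρ hρ) (hσ_one 1) hσ_inv hS hsep, rfl⟩

/-- If a d-ideal `A ∈ I(R)` separates `B_σ(R)`, then the extension map
`θ : Rep A → R` is surjective; in fact for every `π ∈ R` the representation `π_A` of `A`
is nondegenerate and `θ(π_A) = π`. -/
theorem stmt_12 {G : Type} [Group G] [TopologicalSpace G] [IsTopologicalGroup G] [T2Space G]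
    (σ : G → G → ℂ) (hσ : IsNormalizedCocycle G σ)
    (R : Set (PreRep G)) (hR : ∀ ρ ∈ R, ρ.IsRep σ)
    (hDS : ∀ ρ₁ ∈ R, ∀ ρ₂ ∈ R, ρ₁.dsum ρ₂ ∈ R)
    (P : ConvPackage G σ R)
    (S : Set (P.J →L[ℂ] ℂ)) (hS : IsDIdealSet P S)
    -- `A ∈ I(R)`: the extension of every nondegenerate representation of `A` lies in `R`
    (hI : ∀ (π : DRep P S) (V : G → (π.H →L[ℂ] π.H)), π.IsExtOf V → PreRep.mk π.H V ∈ R)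
    -- `A` separates `B_σ(R)`
    (hsep : ∀ f : P.Bmod, (f : G → ℂ) ≠ 0 → ∃ ω ∈ S, ω (P.ι f) ≠ 0) :
    -- for every `π ∈ R`, the representation `π_A : ω ↦ π(ω)` of `A` is nondegenerate
    -- and `θ(π_A) = π`
    (∀ (ρ : PreRep G) (hρ : ρ ∈ R),
      ((Submodule.span ℂ {ψ : ρ.H | ∃ ω ∈ S, ∃ v : ρ.H,
        P.opRep ρ hρ ω v = ψ}).topologicalClosure = ⊤) ∧
      (∀ (x : G), ∀ ω ∈ S, ∀ ψ : ρ.H,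
        ρ.U x (P.opRep ρ hρ ω ψ) = P.opRep ρ hρ (P.conv (P.delta x) ω) ψ)) ∧
    -- hence `θ : Rep A → R` is surjective
    (∀ ρ ∈ R, ∃ (π : DRep P S) (V : G → (π.H →L[ℂ] π.H)),
      π.IsExtOf V ∧ PreRep.mk π.H V = ρ) :=
  stmt_12_general σ hσ R hR P S hS hsep

end
end
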